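/- In an alternating base tree, for any vertex t with E*(T_t) ≠ ∅ and out(t) = {y_t, z_t} with z_t ∈ V(T_t), if t is bireachable (dist^odd(t), dist^even(t) < ∞), then dist^{γ̄(t)}(t) ≥ dist^{ρ(t)}(z_t) + dist^{ρ(t)}(y_t) + 1 − dist^{γ(t)}(t), where ρ(t) = ρ(out(t)). -/

import Mathlib

open Classical

namespace AltMatch

variable {V : Type*}

/-- `M` is a matching of `G`: a set of edges of `G` that pairwise share no vertex. -/
def IsMatching (G : SimpleGraph V) (M : Set (Sym2 V)) : Prop :=
  M ⊆ G.edgeSet ∧ ∀ e₁ ∈ M, ∀ e₂ ∈ M, e₁ ≠ e₂ → ∀ v : V, v ∈ e₁ → v ∉ e₂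

/-- `v` is unmatched by `M`. -/
def Unmatched (M : Set (Sym2 V)) (v : V) : Prop := ∀ e ∈ M, v ∉ e

/-- A walk is alternating (starting with a non-matching edge):
its `i`-th edge is in `M` iff `i` is odd. -/
def Alt {G : SimpleGraph V} {u v : V} (M : Set (Sym2 V)) (w : G.Walk u v) : Prop :=
  ∀ (i : ℕ) (h : i < w.edges.length), (w.edges.get ⟨i, h⟩ ∈ M ↔ i % 2 = 1)

/-- An alternating path (w.r.t. `M`) from `u` to `v`. -/
def IsAltPath (G : SimpleGraph V) (M : Set (Sym2 V)) {u v : V} (w : G.Walk u v) : Prop :=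
  w.IsPath ∧ Alt M w

/-- Parity of a natural number as a `Bool` (`true` = odd). -/
def parityOf (n : ℕ) : Bool := decide (n % 2 = 1)

/-- `altDist G M θ f v` : minimum length of an alternating path from `f` to `v`
of parity `θ` (`true` = odd), or `⊤` if none exists. -/
noncomputable def altDist (G : SimpleGraph V) (M : Set (Sym2 V)) (θ : Bool) (f v : V) : ℕ∞ :=
  sInf {n : ℕ∞ | ∃ w : G.Walk f v, IsAltPath G M w ∧ parityOf w.length = θ ∧ (w.length : ℕ∞) = n}

/-- `gam G M f v` : the parity of the shortest alternating path from `f` to `v`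
(`true` = odd). -/
noncomputable def gam (G : SimpleGraph V) (M : Set (Sym2 V)) (f v : V) : Bool :=
  if altDist G M true f v < altDist G M false f v then true else false

/-- `w` is a shortest `θ`-alternating path from `f` to `v`. -/
def IsShortestAlt (G : SimpleGraph V) (M : Set (Sym2 V)) (θ : Bool) (f v : V)
    (w : G.Walk f v) : Prop :=
  IsAltPath G M w ∧ parityOf w.length = θ ∧ (w.length : ℕ∞) = altDist G M θ f v

/-- An `M`-augmenting path: an alternating path of odd length between two distinct
unmatched vertices. -/
def IsAugPath (G : SimpleGraph V) (M : Set (Sym2 V)) {a b : V} (w : G.Walk a b) : Prop :=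
  a ≠ b ∧ Unmatched M a ∧ Unmatched M b ∧ IsAltPath G M w ∧ w.length % 2 = 1

/-- `μ(G)` : the maximum size of a matching of `G`. -/
noncomputable def matchingNumber (G : SimpleGraph V) : ℕ :=
  sSup {n : ℕ | ∃ M : Set (Sym2 V), IsMatching G M ∧ M.Finite ∧ M.ncard = n}

/-- An alternating base tree for `G`, `M`, `f`: a spanning tree of `G` rooted at `f`
(encoded by its parent function) such that for every `v ≠ f` with parent `u`,
`dist^{γ(v)}(v) = dist^{γ̄(v)}(u) + 1`. -/
structure AltBaseTree (G : SimpleGraph V) (M : Set (Sym2 V)) (f : V) where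
  parent : V → V
  parent_root : parent f = f
  parent_adj : ∀ v, v ≠ f → G.Adj (parent v) v
  parent_reaches : ∀ v, ∃ n : ℕ, parent^[n] v = f
  dist_eq : ∀ v, v ≠ f →
    altDist G M (gam G M f v) f v = altDist G M (!gam G M f v) f (parent v) + 1

namespace AltBaseTree

variable {G : SimpleGraph V} {M : Set (Sym2 V)} {f : V}

/-- `v` belongs to the subtree `T_t` of `T` rooted at `t` (`t` is an ancestor-or-self
of `v`). -/
def InSubtree (T : AltBaseTree G M f) (t v : V) : Prop := ∃ n : ℕ, T.parent^[n] v = t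

/-- `e` is an edge of the tree `T`. -/
def IsTreeEdge (T : AltBaseTree G M f) (e : Sym2 V) : Prop :=
  ∃ v, v ≠ f ∧ e = s(T.parent v, v)

/-- `e` is an outgoing edge of the subtree `T_t`: a non-tree edge of `G` with exactly
one endpoint inside `T_t`. -/
def IsOutgoing (T : AltBaseTree G M f) (t : V) (e : Sym2 V) : Prop :=
  e ∈ G.edgeSet ∧ ¬ T.IsTreeEdge e ∧
    ∃ x y : V, e = s(x, y) ∧ ¬ T.InSubtree t x ∧ T.InSubtree t y

end AltBaseTree

/-- Matching-parity of an edge: `true` (odd) iff `e ∈ M`. -/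
noncomputable def rho (M : Set (Sym2 V)) (e : Sym2 V) : Bool :=
  if e ∈ M then true else false

/-- Sum-level of an edge `e = {x,y}` : `dist^{ρ(e)}(x) + dist^{ρ(e)}(y)`. -/
noncomputable def levelSum (G : SimpleGraph V) (M : Set (Sym2 V)) (f : V) (e : Sym2 V) : ℕ∞ :=
  Sym2.lift ⟨fun x y => altDist G M (rho M e) f x + altDist G M (rho M e) f y,
    fun x y => add_comm _ _⟩ e

/-- Max-level of an edge `e = {x,y}` : `max (dist^{ρ(e)}(x)) (dist^{ρ(e)}(y))`. -/
noncomputable def levelMax (G : SimpleGraph V) (M : Set (Sym2 V)) (f : V) (e : Sym2 V) : ℕ∞ :=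
  Sym2.lift ⟨fun x y => max (altDist G M (rho M e) f x) (altDist G M (rho M e) f y),
    fun x y => max_comm _ _⟩ e

/-- The level of an edge: `(0,0)` for tree edges, and the lexicographic pair
`(sum-level, max-level)` otherwise. -/
noncomputable def level {G : SimpleGraph V} {M : Set (Sym2 V)} {f : V}
    (T : AltBaseTree G M f) (e : Sym2 V) : Lex (ℕ∞ × ℕ∞) :=
  if T.IsTreeEdge e then toLex ((0 : ℕ∞), (0 : ℕ∞))
  else toLex (levelSum G M f e, levelMax G M f e)

/-- The level of a walk: the maximum level of its edges. -/
noncomputable def walkLevel {G : SimpleGraph V} {M : Set (Sym2 V)} {f : V}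
    (T : AltBaseTree G M f) {a b : V} (w : G.Walk a b) : Lex (ℕ∞ × ℕ∞) :=
  (w.edges.map (level T)).foldr max (toLex ((0 : ℕ∞), (0 : ℕ∞)))

/-- `out` assigns to each vertex `v` (whose subtree has an outgoing edge) a
minimum-level outgoing edge of `T_v`. -/
def IsMOE {G : SimpleGraph V} {M : Set (Sym2 V)} {f : V}
    (T : AltBaseTree G M f) (out : V → Sym2 V) : Prop :=
  ∀ v, (∃ e, T.IsOutgoing v e) →
    T.IsOutgoing v (out v) ∧ ∀ e, T.IsOutgoing v e → level T (out v) ≤ level T e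

/-- Canonical tie-breaking rule for MOEs: if a minimum-level outgoing edge of `T_v`
incident to `v` exists, then `out v` is incident to `v`. -/
def CanonicalTie {G : SimpleGraph V} {M : Set (Sym2 V)} {f : V}
    (T : AltBaseTree G M f) (out : V → Sym2 V) : Prop :=
  ∀ v e, T.IsOutgoing v e → (∀ e', T.IsOutgoing v e' → level T e ≤ level T e') →
    v ∈ e → v ∈ out v

/-- Level of `out v`, with the virtual value `(∞,∞)` when `T_v` has no outgoing edge. -/
noncomputable def outLevel {G : SimpleGraph V} {M : Set (Sym2 V)} {f : V}
    (T : AltBaseTree G M f) (out : V → Sym2 V) (v : V) : Lex (ℕ∞ × ℕ∞) :=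
  if ∃ e, T.IsOutgoing v e then level T (out v) else toLex ((⊤ : ℕ∞), (⊤ : ℕ∞))

/-- `P` is a `θ`-extension of the pair `(s,t)`: a shortest `θ`-alternating path from
`f` to `t` passing through `s` with `level(P) < level(out(s))`. -/
def IsExtension {G : SimpleGraph V} {M : Set (Sym2 V)} {f : V}
    (T : AltBaseTree G M f) (out : V → Sym2 V) (θ : Bool) (s : V) {t : V}
    (P : G.Walk f t) : Prop :=
  IsShortestAlt G M θ f t P ∧ s ∈ P.support ∧ walkLevel T P < outLevel T out s

/-- `Q` is a `θ`-extendable path from `s` to `t`: the suffix `P[s,t]` of some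
`θ`-extension `P` of `(s,t)`. -/
def IsExtendablePath [DecidableEq V] {G : SimpleGraph V} {M : Set (Sym2 V)} {f : V}
    (T : AltBaseTree G M f) (out : V → Sym2 V) (θ : Bool) {s t : V}
    (Q : G.Walk s t) : Prop :=
  ∃ (P : G.Walk f t) (hs : s ∈ P.support), IsExtension T out θ s P ∧ P.dropUntil s hs = Q

end AltMatch

open AltMatch

/-!
Let `W` and `R` be shortest alternating paths from `f` to `t` of parities `γ(t)` and `γ̄(t)`.
The distances of a vertex `d` levels below `t` are at least `|W| + d`, so `W` meets `T_t` only
in `t`. If the last edge `{x, t}` of `W` is not a tree edge, it is an outgoing edge of `T_t`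
whose sum-level is at most `|W| - 1 + |R|`, witnessed by `W` minus its last edge and by `R`.
Otherwise the last edge `{x, y}` along which `R` enters `T_t` is not a tree edge either (else
`W` and `R` would end with the same edge and have the same parity), and its sum-level is
at most `|W| + |R| - 1`, witnessed by `R` up to `x` and by `W` followed by `R` backwards from
`t` to `y`. Minimality of `out(t)` then gives `dist(z_t) + dist(y_t) + 1 ≤ |W| + |R|`.
-/

namespace SimpleGraph.Walk

variable {V : Type*} {G : SimpleGraph V}

theorem isPath_append {u v w : V} {p : G.Walk u v} {q : G.Walk v w} (hp : p.IsPath)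
    (hq : q.IsPath) (hpq : ∀ z ∈ p.support, z ∈ q.support → z = v) : (p.append q).IsPath := by
  rw [isPath_def, support_append]
  have hq' := hq.support_nodup
  rw [← q.cons_tail_support, List.nodup_cons] at hq'
  refine hp.support_nodup.append hq'.2 fun z hzp hzq => ?_
  obtain rfl := hpq z hzp (List.mem_of_mem_tail hzq)
  exact hq'.1 hzq

theorem exists_last_crossing (P : V → Prop) {u v : V} (R : G.Walk u v) (hu : ¬ P u)
    (hv : P v) : ∃ (x y : V) (h : G.Adj x y) (R₁ : G.Walk u x) (R₂ : G.Walk y v),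
      ¬ P x ∧ P y ∧ (∀ z ∈ R₂.support, P z) ∧ R = R₁.append (cons h R₂) := by
  induction R using concatRec with
  | Hnil => exact absurd hv hu
  | @Hconcat u x v p h ih =>
    by_cases hx : P x
    · obtain ⟨x', y', h', R₁, R₂, hx', hy', hR₂, rfl⟩ := ih hu hx
      refine ⟨x', y', h', R₁, R₂.concat h, hx', hy', fun z hz => ?_, by
        rw [← append_concat, concat_cons]⟩
      rw [support_concat, List.mem_append, List.mem_singleton] at hz
      rcases hz with hz | rfl
      · exact hR₂ z hz
      · exact hv
    · refine ⟨x, v, h, p, nil, hx, hv, by simp [hv], ?_⟩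
      rw [concat_eq_append]

end SimpleGraph.Walk

namespace AltMatch

open SimpleGraph

variable {V : Type*}

/-- The edge list of a segment, starting at position `k`, of an alternating walk. -/
def AltFrom (M : Set (Sym2 V)) (k : ℕ) (l : List (Sym2 V)) : Prop :=
  ∀ (i : ℕ) (h : i < l.length), (l[i] ∈ M ↔ (i + k) % 2 = 1)

section AltFrom

variable {M : Set (Sym2 V)}

theorem alt_iff_altFrom_zero {G : SimpleGraph V} {u v : V} (w : G.Walk u v) :
    Alt M w ↔ AltFrom M 0 w.edges :=
  Iff.rfl

theorem AltFrom.of_mod_two_eq {k k' : ℕ} {l : List (Sym2 V)} (hl : AltFrom M k l)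
    (hk : k % 2 = k' % 2) : AltFrom M k' l := by
  intro i hi
  rw [hl i hi]
  omega

theorem altFrom_append {k : ℕ} {l₁ l₂ : List (Sym2 V)} :
    AltFrom M k (l₁ ++ l₂) ↔ AltFrom M k l₁ ∧ AltFrom M (l₁.length + k) l₂ := by
  refine ⟨fun h => ⟨fun i hi => ?_, fun i hi => ?_⟩, fun ⟨h₁, h₂⟩ i hi => ?_⟩
  · have := h i (by simp; omega)
    rwa [List.getElem_append_left hi] at this
  · have := h (l₁.length + i) (by simp; omega)
    rw [List.getElem_append_right (by omega)] at this
    simpa [Nat.add_comm, Nat.add_left_comm] using this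
  · by_cases hi₁ : i < l₁.length
    · rw [List.getElem_append_left hi₁]
      exact h₁ i hi₁
    · rw [List.getElem_append_right (by omega), h₂ _ (by simp at hi; omega)]
      omega

theorem altFrom_cons {k : ℕ} {e : Sym2 V} {l : List (Sym2 V)} :
    AltFrom M k (e :: l) ↔ (e ∈ M ↔ k % 2 = 1) ∧ AltFrom M (k + 1) l := by
  rw [← List.singleton_append, altFrom_append]
  simp [AltFrom, Nat.add_comm 1 k]

theorem AltFrom.reverse {k : ℕ} {l : List (Sym2 V)} (hl : AltFrom M k l) :
    AltFrom M (k + l.length + 1) l.reverse := by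
  intro i hi
  rw [List.length_reverse] at hi
  rw [List.getElem_reverse, hl _ (by omega)]
  omega

end AltFrom

theorem parityOf_eq_parityOf_iff {m n : ℕ} : parityOf m = parityOf n ↔ m % 2 = n % 2 := by
  simp only [parityOf, decide_eq_decide]
  omega

theorem rho_eq_parityOf {M : Set (Sym2 V)} {e : Sym2 V} {n : ℕ} (h : e ∈ M ↔ n % 2 = 1) :
    rho M e = parityOf n := by
  by_cases he : e ∈ M <;> simp [rho, parityOf, he, ← h]

section Paths

variable {G : SimpleGraph V} {M : Set (Sym2 V)} {f : V}

theorem alt_append_iff {u v w : V} {p : G.Walk u v} {q : G.Walk v w} :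
    Alt M (p.append q) ↔ Alt M p ∧ AltFrom M p.length q.edges := by
  rw [alt_iff_altFrom_zero, alt_iff_altFrom_zero, Walk.edges_append, altFrom_append,
    Walk.length_edges, Nat.add_zero]

theorem alt_concat_iff {u v w : V} {p : G.Walk u v} (h : G.Adj v w) :
    Alt M (p.concat h) ↔ Alt M p ∧ (s(v, w) ∈ M ↔ p.length % 2 = 1) := by
  rw [Walk.concat_eq_append, alt_append_iff, Walk.edges_cons, altFrom_cons]
  simp [AltFrom]

theorem altDist_le_length {v : V} {w : G.Walk f v} (hw : IsAltPath G M w) :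
    altDist G M (parityOf w.length) f v ≤ w.length :=
  sInf_le ⟨w, hw, rfl, rfl⟩

theorem exists_isShortestAlt {θ : Bool} {v : V} (h : altDist G M θ f v ≠ ⊤) :
    ∃ w : G.Walk f v, IsShortestAlt G M θ f v w := by
  have hne : {n : ℕ∞ | ∃ w : G.Walk f v, IsAltPath G M w ∧ parityOf w.length = θ ∧
      (w.length : ℕ∞) = n}.Nonempty := by
    rw [Set.nonempty_iff_ne_empty]
    intro hemp
    exact h (by rw [altDist, hemp, sInf_empty])
  exact csInf_mem hne

theorem altDist_gam_le (θ : Bool) (v : V) :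
    altDist G M (gam G M f v) f v ≤ altDist G M θ f v := by
  unfold gam
  split_ifs with h <;> cases θ
  exacts [h.le, le_rfl, le_rfl, not_lt.mp h]

theorem levelSum_mk (x y : V) : levelSum G M f s(x, y) =
    altDist G M (rho M s(x, y)) f x + altDist G M (rho M s(x, y)) f y :=
  rfl

theorem levelSum_le_length_add_length {x y : V} {p : G.Walk f x} {q : G.Walk f y}
    (hp : IsAltPath G M p) (hq : IsAltPath G M q) (hpq : p.length % 2 = q.length % 2)
    (he : s(x, y) ∈ M ↔ p.length % 2 = 1) :
    levelSum G M f s(x, y) ≤ (p.length + q.length : ℕ) := by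
  rw [levelSum_mk, rho_eq_parityOf he, Nat.cast_add]
  refine add_le_add (altDist_le_length hp) ?_
  rw [parityOf_eq_parityOf_iff.mpr hpq]
  exact altDist_le_length hq

end Paths

namespace AltBaseTree

variable {G : SimpleGraph V} {M : Set (Sym2 V)} {f : V} (T : AltBaseTree G M f)

theorem inSubtree_self (t : V) : T.InSubtree t t :=
  ⟨0, rfl⟩

theorem inSubtree_root (v : V) : T.InSubtree f v :=
  T.parent_reaches v

theorem not_inSubtree_root {t : V} (htf : t ≠ f) : ¬ T.InSubtree t f :=
  fun ⟨n, hn⟩ => htf (by rw [← hn, Function.iterate_fixed T.parent_root])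

theorem IsTreeEdge.eq_of_crossing {T : AltBaseTree G M f} {t x y : V}
    (he : T.IsTreeEdge s(x, y)) (hx : ¬ T.InSubtree t x) (hy : T.InSubtree t y) :
    y = t ∧ x = T.parent t := by
  obtain ⟨u, -, hu⟩ := he
  obtain ⟨n, hn⟩ := hy
  rcases Sym2.eq_iff.mp hu with ⟨rfl, rfl⟩ | ⟨rfl, rfl⟩
  · rcases n with _ | n
    · exact ⟨hn, hn ▸ rfl⟩
    · exact absurd ⟨n, by rwa [Function.iterate_succ_apply] at hn⟩ hx
  · exact absurd ⟨n + 1, by rwa [Function.iterate_succ_apply]⟩ hx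

theorem add_le_altDist_of_iterate_parent {t : V} (htf : t ≠ f) {n : ℕ} {v : V}
    (hv : T.parent^[n] v = t) (θ : Bool) :
    altDist G M (gam G M f t) f t + n ≤ altDist G M θ f v := by
  induction n generalizing v θ with
  | zero =>
    subst hv
    simpa using altDist_gam_le θ v
  | succ n ih =>
    have hvf : v ≠ f := by
      rintro rfl
      exact htf (by rw [← hv, Function.iterate_fixed T.parent_root])
    calc altDist G M (gam G M f t) f t + (n + 1 : ℕ)
        = altDist G M (gam G M f t) f t + n + 1 := by push_cast; rw [add_assoc]
      _ ≤ altDist G M (!gam G M f v) f (T.parent v) + 1 :=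
          add_le_add_left (ih (by rwa [← Function.iterate_succ_apply]) _) 1
      _ = altDist G M (gam G M f v) f v := (T.dist_eq v hvf).symm
      _ ≤ altDist G M θ f v := altDist_gam_le θ v

theorem eq_of_mem_support_of_inSubtree {t : V} (htf : t ≠ f) {W : G.Walk f t}
    (hW : IsShortestAlt G M (gam G M f t) f t W) {v : V} (hv : v ∈ W.support)
    (hsub : T.InSubtree t v) : v = t := by
  obtain ⟨n, hn⟩ := hsub
  rcases n with _ | n
  · exact hn
  obtain ⟨p, q, hp, -, rfl⟩ := hW.1.1.mem_support_iff_exists_append.mp hv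
  have hfar := T.add_le_altDist_of_iterate_parent htf hn (parityOf p.length)
  have hnear := altDist_le_length ⟨hp, (alt_append_iff.mp hW.1.2).1⟩
  rw [← hW.2.2, Walk.length_append] at hfar
  have := hfar.trans hnear
  norm_cast at this
  omega

end AltBaseTree

theorem IsMOE.levelSum_le {G : SimpleGraph V} {M : Set (Sym2 V)} {f : V}
    {T : AltBaseTree G M f} {out : V → Sym2 V} (hmoe : IsMOE T out) {t : V} {g : Sym2 V}
    (hg : T.IsOutgoing t g) : levelSum G M f (out t) ≤ levelSum G M f g := by
  obtain ⟨hout, hmin⟩ := hmoe t ⟨g, hg⟩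
  have hle := hmin g hg
  rw [level, level, if_neg hout.2.1, if_neg hg.2.1, Prod.Lex.toLex_le_toLex] at hle
  rcases hle with hlt | ⟨heq, -⟩
  exacts [hlt.le, heq.le]

section Splicing

variable {G : SimpleGraph V} {M : Set (Sym2 V)} {f : V}

theorem length_mod_two_eq_of_alt_concat {u v w : V} {p q : G.Walk u v} {h h' : G.Adj v w}
    (hp : Alt M (p.concat h)) (hq : Alt M (q.concat h')) : p.length % 2 = q.length % 2 := by
  have hp' := ((alt_concat_iff h).mp hp).2
  have hq' := ((alt_concat_iff h').mp hq).2
  have := hp'.symm.trans hq'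
  omega

theorem levelSum_add_one_le_of_last_crossing (T : AltBaseTree G M f) {t : V} (htf : t ≠ f)
    {W : G.Walk f t} (hW : IsShortestAlt G M (gam G M f t) f t W) {x y : V} {R₁ : G.Walk f x}
    (h : G.Adj x y) {R₂ : G.Walk y t} (hR : IsAltPath G M (R₁.append (.cons h R₂)))
    (hWR : W.length % 2 ≠ (R₁.append (.cons h R₂)).length % 2)
    (hR₂ : ∀ z ∈ R₂.support, T.InSubtree t z) :
    levelSum G M f s(x, y) + 1 ≤ (W.length + (R₁.append (.cons h R₂)).length : ℕ) := by
  rw [Walk.length_append, Walk.length_cons] at hWR ⊢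
  obtain ⟨hR₁, hR₂alt⟩ := alt_append_iff.mp hR.2
  rw [Walk.edges_cons, altFrom_cons] at hR₂alt
  obtain ⟨hxy, hR₂alt⟩ := hR₂alt
  have hpath : (W.append R₂.reverse).IsPath :=
    Walk.isPath_append hW.1.1 hR.1.of_append_right.of_cons.reverse fun z hzW hzR =>
      T.eq_of_mem_support_of_inSubtree htf hW hzW (hR₂ z (by simpa using hzR))
  have halt : Alt M (W.append R₂.reverse) := by
    refine alt_append_iff.mpr ⟨hW.1.2, ?_⟩
    rw [Walk.edges_reverse]
    exact hR₂alt.reverse.of_mod_two_eq (by rw [Walk.length_edges]; omega)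
  have hle := levelSum_le_length_add_length ⟨hR.1.of_append_left, hR₁⟩ ⟨hpath, halt⟩
    (by rw [Walk.length_append, Walk.length_reverse]; omega) hxy
  rw [Walk.length_append, Walk.length_reverse] at hle
  calc levelSum G M f s(x, y) + 1 ≤ (R₁.length + (W.length + R₂.length) : ℕ) + 1 :=
        add_le_add_left hle 1
    _ = (W.length + (R₁.length + (R₂.length + 1)) : ℕ) := by norm_cast; omega

theorem exists_isOutgoing_levelSum_add_one_le (T : AltBaseTree G M f) {t : V} (htf : t ≠ f)
    {W R : G.Walk f t} (hW : IsShortestAlt G M (gam G M f t) f t W) (hR : IsAltPath G M R)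
    (hWR : W.length % 2 ≠ R.length % 2) :
    ∃ g, T.IsOutgoing t g ∧ levelSum G M f g + 1 ≤ (W.length + R.length : ℕ) := by
  obtain ⟨x, hx, W₁, rfl⟩ : ∃ x, ∃ (hx : G.Adj x t) (W₁ : G.Walk f x), W = W₁.concat hx :=
    ⟨_, _, _, (W.concat_dropLast (W.adj_penultimate (Walk.not_nil_of_ne htf.symm))).symm⟩
  have hxt : ¬ T.InSubtree t x := fun hsub =>
    hx.ne (T.eq_of_mem_support_of_inSubtree htf hW (by simp [Walk.support_concat]) hsub)
  by_cases htree : T.IsTreeEdge s(x, t)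
  · obtain ⟨-, rfl⟩ := htree.eq_of_crossing hxt (T.inSubtree_self t)
    obtain ⟨x', y', h', R₁, R₂, hx', hy', hR₂, rfl⟩ := Walk.exists_last_crossing
      (T.InSubtree t) R (T.not_inSubtree_root htf) (T.inSubtree_self t)
    by_cases htree' : T.IsTreeEdge s(x', y')
    · obtain ⟨rfl, rfl⟩ := htree'.eq_of_crossing hx' hy'
      obtain rfl := (Walk.isPath_iff_nil.mp hR.1.of_append_right.of_cons).eq_nil
      rw [← Walk.concat_eq_append] at hR hWR
      rw [Walk.length_concat, Walk.length_concat] at hWR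
      have := length_mod_two_eq_of_alt_concat hW.1.2 hR.2
      omega
    · exact ⟨s(x', y'), ⟨G.mem_edgeSet.mpr h', htree', x', y', rfl, hx', hy'⟩,
        levelSum_add_one_le_of_last_crossing T htf hW h' hR hWR hR₂⟩
  · refine ⟨s(x, t), ⟨G.mem_edgeSet.mpr hx, htree, x, t, rfl, hxt, T.inSubtree_self t⟩, ?_⟩
    obtain ⟨hW₁, hxtM⟩ := (alt_concat_iff hx).mp hW.1.2
    rw [Walk.length_concat] at hWR ⊢
    have hle := levelSum_le_length_add_length
      ⟨((Walk.concat_isPath_iff hx).mp hW.1.1).1, hW₁⟩ hR (by omega) hxtM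
    calc levelSum G M f s(x, t) + 1 ≤ (W₁.length + R.length : ℕ) + 1 := add_le_add_left hle 1
      _ = (W₁.length + 1 + R.length : ℕ) := by norm_cast; omega

end Splicing

end AltMatch

open AltMatch

theorem opp_dist_lower_bound_via_moe_general
    {V : Type*} (G : SimpleGraph V) (M : Set (Sym2 V))
    (f : V)
    (T : AltBaseTree G M f) (out : V → Sym2 V) (hmoe : IsMOE T out)
    (t yt zt : V)
    (hout : out t = s(yt, zt)) (hyt : ¬ T.InSubtree t yt)
    (hodd : altDist G M true f t ≠ ⊤) (heven : altDist G M false f t ≠ ⊤) :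
    altDist G M (!gam G M f t) f t ≥
      altDist G M (rho M (out t)) f zt + altDist G M (rho M (out t)) f yt + 1 -
        altDist G M (gam G M f t) f t := by
  have htf : t ≠ f := by
    rintro rfl
    exact hyt (T.inSubtree_root yt)
  have hfin : ∀ θ, altDist G M θ f t ≠ ⊤ := by
    intro θ
    cases θ <;> assumption
  obtain ⟨W, hW⟩ := exists_isShortestAlt (hfin (gam G M f t))
  obtain ⟨R, hR⟩ := exists_isShortestAlt (hfin (!gam G M f t))
  have hWR : W.length % 2 ≠ R.length % 2 := by
    rw [Ne, ← parityOf_eq_parityOf_iff, hW.2.1, hR.2.1]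
    exact Bool.self_ne_not _
  obtain ⟨g, hg, hle⟩ := exists_isOutgoing_levelSum_add_one_le T htf hW hR.1 hWR
  rw [ge_iff_le, tsub_le_iff_right, ← hW.2.2, ← hR.2.2]
  calc altDist G M (rho M (out t)) f zt + altDist G M (rho M (out t)) f yt + 1
      = levelSum G M f (out t) + 1 := by rw [hout, levelSum_mk, add_comm (altDist _ _ _ _ zt)]
    _ ≤ levelSum G M f g + 1 := add_le_add_left (hmoe.levelSum_le hg) 1
    _ ≤ (W.length + R.length : ℕ) := hle
    _ = R.length + W.length := by push_cast; rw [add_comm]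

/-- For a bireachable vertex `t` with `out(t) = {y_t, z_t}`, `z_t ∈ T_t`:
`dist^{γ̄(t)}(t) ≥ dist^{ρ(t)}(z_t) + dist^{ρ(t)}(y_t) + 1 − dist^{γ(t)}(t)`. -/
theorem opp_dist_lower_bound_via_moe
    {V : Type*} [Fintype V] [DecidableEq V] (G : SimpleGraph V) (M : Set (Sym2 V))
    (f : V) (hM : IsMatching G M) (hf : Unmatched M f)
    (hreach : ∀ v : V, altDist G M true f v ≠ ⊤ ∨ altDist G M false f v ≠ ⊤)
    (T : AltBaseTree G M f) (out : V → Sym2 V) (hmoe : IsMOE T out)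
    (t yt zt : V)
    (hstar : ∃ e, T.IsOutgoing t e ∧ levelSum G M f e ≠ ⊤)
    (hout : out t = s(yt, zt)) (hzt : T.InSubtree t zt) (hyt : ¬ T.InSubtree t yt)
    (hodd : altDist G M true f t ≠ ⊤) (heven : altDist G M false f t ≠ ⊤) :
    altDist G M (!gam G M f t) f t ≥
      altDist G M (rho M (out t)) f zt + altDist G M (rho M (out t)) f yt + 1 -
        altDist G M (gam G M f t) f t :=
  opp_dist_lower_bound_via_moe_general G M f T out hmoe t yt zt hout hyt hodd heven
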